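/- Consider a randomized process producing a finite sequence of items v_1, v_2, …, where the i-th item v_i is sampled from a (random, history-dependent) candidate set C_i with probability p_{v_i} = 1/(val(v_i)·z(C_i)), where z(C) = Σ_{u∈C} 1/val(u), and suppose every candidate set satisfies |C_i| ≥ |D|/ε for a fixed set D chosen independently of the process's randomness. Then for each step i, E[val(v_i)·1[v_i ∈ D]] = E[|C_i ∩ D|/z(C_i)] ≤ E[|D|/z(C_i)] ≤ ε·E[|C_i|/z(C_i)] = ε·E[val(v_i)]. -/
import Mathlib


/-- The prefix of a history `h` of length `m`, consisting of its first `i`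
coordinates. -/
def prefixOf {V : Type*} {m : ℕ} (h : Fin m → V) (i : Fin m) : Fin (i : ℕ) → V :=
  fun j => h ⟨j.1, j.2.trans i.2⟩

/-- Normalizing constant for sampling from `C` with probability proportional
to `1 / val`. -/
noncomputable def zC {V : Type*} (val : V → ℝ) (C : Finset V) : ℝ :=
  ∑ u ∈ C, 1 / val u

/-- The probability that a process which, at each step `i`, samples an item
from the (history-dependent) candidate set `C i` with probability proportional
to `1 / val`, produces exactly the history `h`. -/
noncomputable def histProb {V : Type*} [DecidableEq V] {m : ℕ}
    (val : V → ℝ) (C : (i : Fin m) → (Fin (i : ℕ) → V) → Finset V)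
    (h : Fin m → V) : ℝ :=
  ∏ i : Fin m,
    if h i ∈ C i (prefixOf h i) then
      1 / (val (h i) * zC val (C i (prefixOf h i)))
    else 0

set_option linter.unusedSectionVars false
section Aux

variable {V : Type*} [DecidableEq V] [Fintype V] {m : ℕ}

/-- One step factor of `histProb`. -/
noncomputable def Fstep (val : V → ℝ) (C : (i : Fin m) → (Fin (i : ℕ) → V) → Finset V)
    (j : Fin m) (h : Fin m → V) : ℝ :=
  if h j ∈ C j (prefixOf h j) then
    1 / (val (h j) * zC val (C j (prefixOf h j)))
  else 0

lemma histProb_eq (val : V → ℝ) (C : (i : Fin m) → (Fin (i : ℕ) → V) → Finset V)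
    (h : Fin m → V) : histProb val C h = ∏ j : Fin m, Fstep val C j h := rfl

/-- Conditional expectation of `g` under one sampling step from `C'`. -/
noncomputable def Gexp (val : V → ℝ) (g : V → Finset V → ℝ) (C' : Finset V) : ℝ :=
  ∑ u ∈ C', (1 / (val u * zC val C')) * g u C'

lemma prefixOf_congr {h h' : Fin m → V} {i : Fin m}
    (H : ∀ j : Fin m, (j : ℕ) < (i : ℕ) → h j = h' j) :
    prefixOf h i = prefixOf h' i := by
  funext j
  exact H ⟨j.1, j.2.trans i.2⟩ j.2

lemma Fstep_congr (val : V → ℝ) (C : (i : Fin m) → (Fin (i : ℕ) → V) → Finset V)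
    (j : Fin m) {h h' : Fin m → V}
    (H : ∀ l : Fin m, (l : ℕ) ≤ (j : ℕ) → h l = h' l) :
    Fstep val C j h = Fstep val C j h' := by
  have h1 : prefixOf h j = prefixOf h' j := prefixOf_congr (fun l hl => H l hl.le)
  have h2 : h j = h' j := H j le_rfl
  unfold Fstep
  rw [h1, h2]

lemma zC_pos (val : V → ℝ) (hval : ∀ u : V, 0 < val u) {C' : Finset V}
    (hC' : C'.Nonempty) : 0 < zC val C' :=
  Finset.sum_pos (fun u _ => by have := hval u; positivity) hC'

lemma zC_nonneg (val : V → ℝ) (hval : ∀ u : V, 0 < val u) (C' : Finset V) :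
    0 ≤ zC val C' :=
  Finset.sum_nonneg (fun u _ => by have := hval u; positivity)

lemma sum_step_one (val : V → ℝ) (hval : ∀ u : V, 0 < val u) {C' : Finset V}
    (hC' : C'.Nonempty) :
    ∑ u ∈ C', 1 / (val u * zC val C') = 1 := by
  have hz : zC val C' ≠ 0 := (zC_pos val hval hC').ne'
  have : ∑ u ∈ C', 1 / (val u * zC val C') = (∑ u ∈ C', 1 / val u) / zC val C' := by
    rw [Finset.sum_div]
    refine Finset.sum_congr rfl fun u _ => ?_
    rw [one_div, mul_inv, ← div_eq_mul_inv, one_div]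
  rw [this]
  rw [show (∑ u ∈ C', 1 / val u) = zC val C' from rfl, div_self hz]

lemma histProb_nonneg (val : V → ℝ) (hval : ∀ u : V, 0 < val u)
    (C : (i : Fin m) → (Fin (i : ℕ) → V) → Finset V) (h : Fin m → V) :
    0 ≤ histProb val C h := by
  refine Finset.prod_nonneg fun j _ => ?_
  split
  · have := hval (h j)
    have := zC_nonneg val hval (C j (prefixOf h j))
    positivity
  · exact le_refl _

end Aux

section Key
set_option linter.unusedSectionVars false
variable {V : Type*} [DecidableEq V] [Fintype V] {m : ℕ}

lemma key_step [Nonempty V] (val : V → ℝ) (hval : ∀ u : V, 0 < val u)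
    (C : (i : Fin m) → (Fin (i : ℕ) → V) → Finset V)
    (k : Fin m) (ψ : (Fin m → V) → ℝ)
    (hψ : ∀ h h' : Fin m → V, (∀ j : Fin m, (j : ℕ) < (k : ℕ) → h j = h' j) → ψ h = ψ h')
    (g : V → Finset V → ℝ) :
    (Fintype.card V : ℝ) *
        ∑ h : Fin m → V, ψ h * (Fstep val C k h * g (h k) (C k (prefixOf h k)))
      = ∑ h : Fin m → V, ψ h * Gexp val g (C k (prefixOf h k)) := by
  classical
  set e := Equiv.funSplitAt k V with he
  have hsum : ∀ A : (Fin m → V) → ℝ,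
      ∑ h : Fin m → V, A h
        = ∑ f : { j : Fin m // j ≠ k } → V, ∑ u : V, A (e.symm (u, f)) := by
    intro A
    rw [← Equiv.sum_comp e.symm A, Fintype.sum_prod_type, Finset.sum_comm]
  have hcoordk : ∀ (u : V) (f : { j : Fin m // j ≠ k } → V), e.symm (u, f) k = u := by
    intro u f
    simp [he, Equiv.funSplitAt]
  have hcoord : ∀ (u : V) (f : { j : Fin m // j ≠ k } → V) (j : Fin m) (hj : j ≠ k),
      e.symm (u, f) j = f ⟨j, hj⟩ := by
    intro u f j hj
    simp [he, Equiv.funSplitAt, dif_neg hj]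
  rw [hsum fun h => ψ h * (Fstep val C k h * g (h k) (C k (prefixOf h k))),
    hsum fun h => ψ h * Gexp val g (C k (prefixOf h k)), Finset.mul_sum]
  refine Finset.sum_congr rfl fun f _ => ?_
  -- fix a base point
  obtain ⟨u₀⟩ := ‹Nonempty V›
  have hlt : ∀ (u u' : V) (j : Fin m), (j : ℕ) < (k : ℕ) →
      e.symm (u, f) j = e.symm (u', f) j := by
    intro u u' j hj
    have hjk : j ≠ k := fun hh => absurd (hh ▸ hj) (lt_irrefl _)
    rw [hcoord u f j hjk, hcoord u' f j hjk]
  have hψconst : ∀ u : V, ψ (e.symm (u, f)) = ψ (e.symm (u₀, f)) :=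
    fun u => hψ _ _ (hlt u u₀)
  have hpre : ∀ u : V, prefixOf (e.symm (u, f)) k = prefixOf (e.symm (u₀, f)) k :=
    fun u => prefixOf_congr (hlt u u₀)
  set C' := C k (prefixOf (e.symm (u₀, f)) k) with hC'
  have hF : ∀ u : V, Fstep val C k (e.symm (u, f))
      = if u ∈ C' then 1 / (val u * zC val C') else 0 := by
    intro u
    unfold Fstep
    rw [hpre u, hcoordk u f]
  have L : ∑ u : V, ψ (e.symm (u, f)) * (Fstep val C k (e.symm (u, f)) *
      g ((e.symm (u, f)) k) (C k (prefixOf (e.symm (u, f)) k)))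
      = ψ (e.symm (u₀, f)) * Gexp val g C' := by
    calc ∑ u : V, ψ (e.symm (u, f)) * (Fstep val C k (e.symm (u, f)) *
          g ((e.symm (u, f)) k) (C k (prefixOf (e.symm (u, f)) k)))
        = ∑ u : V, ψ (e.symm (u₀, f)) *
            (if u ∈ C' then (1 / (val u * zC val C')) * g u C' else 0) := by
          refine Finset.sum_congr rfl fun u _ => ?_
          rw [hψconst u, hF u, hcoordk u f, hpre u, ite_mul, zero_mul]
      _ = ψ (e.symm (u₀, f)) *
            ∑ u : V, (if u ∈ C' then (1 / (val u * zC val C')) * g u C' else 0) :=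
          (Finset.mul_sum _ _ _).symm
      _ = ψ (e.symm (u₀, f)) * Gexp val g C' := by
          rw [Finset.sum_ite_mem, Finset.univ_inter]; rfl
  have R : ∑ u : V, ψ (e.symm (u, f)) * Gexp val g (C k (prefixOf (e.symm (u, f)) k))
      = (Fintype.card V : ℝ) * (ψ (e.symm (u₀, f)) * Gexp val g C') := by
    calc ∑ u : V, ψ (e.symm (u, f)) * Gexp val g (C k (prefixOf (e.symm (u, f)) k))
        = ∑ _u : V, ψ (e.symm (u₀, f)) * Gexp val g C' := by
          refine Finset.sum_congr rfl fun u _ => ?_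
          rw [hψconst u, hpre u]
      _ = (Fintype.card V : ℝ) * (ψ (e.symm (u₀, f)) * Gexp val g C') := by
          rw [Finset.sum_const, Finset.card_univ, nsmul_eq_mul]
  rw [L, R]

lemma filter_lt_succ {m : ℕ} (k : ℕ) (hk : k < m) :
    Finset.univ.filter (fun j : Fin m => (j : ℕ) < k + 1)
      = insert (⟨k, hk⟩ : Fin m)
          (Finset.univ.filter (fun j : Fin m => (j : ℕ) < k)) := by
  ext j
  simp only [Finset.mem_filter, Finset.mem_univ, true_and, Finset.mem_insert, Fin.ext_iff]
  omega

lemma claim [Nonempty V] (val : V → ℝ) (hval : ∀ u : V, 0 < val u)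
    (C : (i : Fin m) → (Fin (i : ℕ) → V) → Finset V)
    (hC_ne : ∀ (i : Fin m) (h : Fin (i : ℕ) → V), (C i h).Nonempty) :
    ∀ d : ℕ, d ≤ m → ∀ φ : (Fin m → V) → ℝ,
      (∀ h h' : Fin m → V, (∀ j : Fin m, (j : ℕ) < m - d → h j = h' j) → φ h = φ h') →
      ∑ h : Fin m → V,
          (∏ j ∈ Finset.univ.filter (fun j : Fin m => (j : ℕ) < m - d), Fstep val C j h) * φ h
        = (Fintype.card V : ℝ) ^ d * ∑ h : Fin m → V, histProb val C h * φ h := by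
  intro d
  induction d with
  | zero =>
    intro _ φ _
    simp only [Nat.sub_zero, pow_zero, one_mul]
    refine Finset.sum_congr rfl fun h _ => ?_
    rw [Finset.filter_true_of_mem (fun j _ => j.2), histProb_eq]
  | succ d ih =>
    intro hd φ hφ
    have hkm : m - (d + 1) < m := by omega
    set k : ℕ := m - (d + 1) with hkdef
    have hsub : m - d = k + 1 := by omega
    set kf : Fin m := ⟨k, hkm⟩ with hkf
    set ψ : (Fin m → V) → ℝ := fun h =>
      (∏ j ∈ Finset.univ.filter (fun j : Fin m => (j : ℕ) < k), Fstep val C j h) * φ h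
      with hψdef
    have hψ' : ∀ h h' : Fin m → V, (∀ j : Fin m, (j : ℕ) < (kf : ℕ) → h j = h' j) →
        ψ h = ψ h' := by
      intro h h' H
      rw [hψdef]
      dsimp only
      rw [hφ h h' (fun j hj => H j hj)]
      congr 1
      refine Finset.prod_congr rfl fun j hj => ?_
      have hjk : (j : ℕ) < k := (Finset.mem_filter.mp hj).2
      exact Fstep_congr val C j (fun l hl => H l (lt_of_le_of_lt hl hjk))
    have hGone : ∀ h : Fin m → V,
        Gexp val (fun _ _ => (1 : ℝ)) (C kf (prefixOf h kf)) = 1 := by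
      intro h
      rw [Gexp]
      simp only [mul_one]
      exact sum_step_one val hval (hC_ne kf _)
    have step := key_step val hval C kf ψ hψ' (fun _ _ => (1 : ℝ))
    simp only [mul_one] at step
    have step2 : ∑ h : Fin m → V, ψ h * Gexp val (fun _ _ => (1 : ℝ)) (C kf (prefixOf h kf))
        = ∑ h : Fin m → V, ψ h :=
      Finset.sum_congr rfl fun h _ => by rw [hGone h, mul_one]
    rw [step2] at step
    -- step : (card V) * ∑ h, ψ h * Fstep val C kf h = ∑ h, ψ h
    have hmerge : ∀ h : Fin m → V, ψ h * Fstep val C kf h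
        = (∏ j ∈ Finset.univ.filter (fun j : Fin m => (j : ℕ) < m - d), Fstep val C j h) * φ h := by
      intro h
      rw [hsub, filter_lt_succ k hkm, Finset.prod_insert (by simp), hψdef]
      ring
    calc ∑ h : Fin m → V,
          (∏ j ∈ Finset.univ.filter (fun j : Fin m => (j : ℕ) < m - (d + 1)), Fstep val C j h) * φ h
        = ∑ h : Fin m → V, ψ h := rfl
      _ = (Fintype.card V : ℝ) * ∑ h : Fin m → V, ψ h * Fstep val C kf h := step.symm
      _ = (Fintype.card V : ℝ) * ∑ h : Fin m → V,
            (∏ j ∈ Finset.univ.filter (fun j : Fin m => (j : ℕ) < m - d), Fstep val C j h) * φ h := by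
          rw [Finset.sum_congr rfl (fun h _ => hmerge h)]
      _ = (Fintype.card V : ℝ) * ((Fintype.card V : ℝ) ^ d * ∑ h : Fin m → V, histProb val C h * φ h) := by
          rw [ih (by omega) φ (fun h h' H => hφ h h' (fun j hj => H j (by omega)))]
      _ = (Fintype.card V : ℝ) ^ (d + 1) * ∑ h : Fin m → V, histProb val C h * φ h := by
          ring

lemma cond_exp [Nonempty V] (val : V → ℝ) (hval : ∀ u : V, 0 < val u)
    (C : (i : Fin m) → (Fin (i : ℕ) → V) → Finset V)
    (hC_ne : ∀ (i : Fin m) (h : Fin (i : ℕ) → V), (C i h).Nonempty)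
    (i : Fin m) (g : V → Finset V → ℝ) :
    ∑ h : Fin m → V, histProb val C h * g (h i) (C i (prefixOf h i))
      = ∑ h : Fin m → V, histProb val C h * Gexp val g (C i (prefixOf h i)) := by
  have him : (i : ℕ) < m := i.2
  set d : ℕ := m - ((i : ℕ) + 1) with hddef
  have hsub : m - d = (i : ℕ) + 1 := by omega
  have hdep : ∀ φ' : (Fin m → V) → ℝ,
      (∀ h h' : Fin m → V, (∀ j : Fin m, (j : ℕ) < (i : ℕ) + 1 → h j = h' j) → φ' h = φ' h') →
      (∀ h h' : Fin m → V, (∀ j : Fin m, (j : ℕ) < m - d → h j = h' j) → φ' h = φ' h') := by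
    intro φ' H h h' H'
    exact H h h' (fun j hj => H' j (by omega))
  set φ₁ : (Fin m → V) → ℝ := fun h => g (h i) (C i (prefixOf h i)) with hφ₁def
  set φ₂ : (Fin m → V) → ℝ := fun h => Gexp val g (C i (prefixOf h i)) with hφ₂def
  have hφ₁ : ∀ h h' : Fin m → V, (∀ j : Fin m, (j : ℕ) < (i : ℕ) + 1 → h j = h' j) →
      φ₁ h = φ₁ h' := by
    intro h h' H
    rw [hφ₁def]
    dsimp only
    rw [prefixOf_congr (fun j hj => H j (by omega)), H i (by omega)]
  have hφ₂ : ∀ h h' : Fin m → V, (∀ j : Fin m, (j : ℕ) < (i : ℕ) + 1 → h j = h' j) →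
      φ₂ h = φ₂ h' := by
    intro h h' H
    rw [hφ₂def]
    dsimp only
    rw [prefixOf_congr (fun j hj => H j (by omega))]
  have c1 := claim val hval C hC_ne d (by omega) φ₁ (hdep φ₁ hφ₁)
  have c2 := claim val hval C hC_ne d (by omega) φ₂ (hdep φ₂ hφ₂)
  set ψ : (Fin m → V) → ℝ := fun h =>
    ∏ j ∈ Finset.univ.filter (fun j : Fin m => (j : ℕ) < (i : ℕ)), Fstep val C j h with hψdef
  have hψ : ∀ h h' : Fin m → V, (∀ j : Fin m, (j : ℕ) < (i : ℕ) → h j = h' j) →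
      ψ h = ψ h' := by
    intro h h' H
    rw [hψdef]
    refine Finset.prod_congr rfl fun j hj => ?_
    have hji : (j : ℕ) < (i : ℕ) := (Finset.mem_filter.mp hj).2
    exact Fstep_congr val C j (fun l hl => H l (lt_of_le_of_lt hl hji))
  have s1 := key_step val hval C i ψ hψ g
  have s2 := key_step val hval C i ψ hψ (fun _ C' => Gexp val g C')
  have hGG : ∀ h : Fin m → V,
      Gexp val (fun _ C' => Gexp val g C') (C i (prefixOf h i))
        = Gexp val g (C i (prefixOf h i)) := by
    intro h
    rw [Gexp, ← Finset.sum_mul, sum_step_one val hval (hC_ne i _), one_mul]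
  have s2' : (Fintype.card V : ℝ) *
      ∑ h : Fin m → V, ψ h * (Fstep val C i h * Gexp val g (C i (prefixOf h i)))
        = ∑ h : Fin m → V, ψ h * Gexp val g (C i (prefixOf h i)) := by
    rw [s2]
    exact Finset.sum_congr rfl fun h _ => by rw [hGG h]
  have hN : (0 : ℝ) < (Fintype.card V : ℝ) := by
    exact_mod_cast Fintype.card_pos
  have hAB : ∑ h : Fin m → V, ψ h * (Fstep val C i h * g (h i) (C i (prefixOf h i)))
      = ∑ h : Fin m → V, ψ h * (Fstep val C i h * Gexp val g (C i (prefixOf h i))) := by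
    have := s1.trans s2'.symm
    exact mul_left_cancel₀ hN.ne' this
  have hmerge : ∀ (φ' : (Fin m → V) → ℝ) (h : Fin m → V),
      (∏ j ∈ Finset.univ.filter (fun j : Fin m => (j : ℕ) < m - d), Fstep val C j h) * φ' h
        = ψ h * (Fstep val C i h * φ' h) := by
    intro φ' h
    rw [hsub, filter_lt_succ (i : ℕ) him, Finset.prod_insert (by simp), hψdef]
    have : (⟨(i : ℕ), him⟩ : Fin m) = i := Fin.eta i him
    rw [this]
    ring
  have c1' : ∑ h : Fin m → V,
      (∏ j ∈ Finset.univ.filter (fun j : Fin m => (j : ℕ) < m - d), Fstep val C j h) * φ₁ h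
        = ∑ h : Fin m → V, ψ h * (Fstep val C i h * g (h i) (C i (prefixOf h i))) :=
    Finset.sum_congr rfl fun h _ => hmerge φ₁ h
  have c2' : ∑ h : Fin m → V,
      (∏ j ∈ Finset.univ.filter (fun j : Fin m => (j : ℕ) < m - d), Fstep val C j h) * φ₂ h
        = ∑ h : Fin m → V, ψ h * (Fstep val C i h * Gexp val g (C i (prefixOf h i))) :=
    Finset.sum_congr rfl fun h _ => hmerge φ₂ h
  have key : (Fintype.card V : ℝ) ^ d * ∑ h : Fin m → V, histProb val C h * φ₁ h
      = (Fintype.card V : ℝ) ^ d * ∑ h : Fin m → V, histProb val C h * φ₂ h := by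
    rw [← c1, ← c2, c1', c2', hAB]
  exact mul_left_cancel₀ (by positivity) key

lemma Gexp_indicator (val : V → ℝ) (hval : ∀ u : V, 0 < val u) (D C' : Finset V) :
    Gexp val (fun u _ => if u ∈ D then val u else 0) C'
      = ((C' ∩ D).card : ℝ) / zC val C' := by
  rw [Gexp]
  have hterm : ∀ u ∈ C', (1 / (val u * zC val C')) * (if u ∈ D then val u else 0)
      = if u ∈ D then 1 / zC val C' else 0 := by
    intro u _
    rw [mul_ite, mul_zero, div_mul_eq_mul_div, one_mul, ← div_div,
      div_self (hval u).ne']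
  rw [Finset.sum_congr rfl hterm, Finset.sum_ite_mem, Finset.sum_const, nsmul_eq_mul,
    mul_one_div]

lemma Gexp_val (val : V → ℝ) (hval : ∀ u : V, 0 < val u) (C' : Finset V) :
    Gexp val (fun u _ => val u) C' = (C'.card : ℝ) / zC val C' := by
  rw [Gexp]
  have hterm : ∀ u ∈ C', (1 / (val u * zC val C')) * val u = 1 / zC val C' := by
    intro u _
    rw [div_mul_eq_mul_div, one_mul, ← div_div, div_self (hval u).ne']
  rw [Finset.sum_congr rfl hterm, Finset.sum_const, nsmul_eq_mul, mul_one_div]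

end Key


/-- **Per-step deletion mass bound.**  A randomized process samples a finite
sequence of items `h 0, h 1, …`, the `i`-th item being drawn from a (random,
history-dependent) nonempty candidate set `C i (prefixOf h i)` with probability
proportional to `1 / val`, where every candidate set has at least `|D| / ε`
items for a fixed set `D` chosen independently of the process's randomness.
Then for each step `i`:
`E[val(v i)·1[v i ∈ D]] = E[|C i ∩ D| / z(C i)] ≤ E[|D| / z(C i)]
  ≤ ε·E[|C i| / z(C i)] = ε·E[val(v i)]`. -/
theorem per_step_deletion_mass_bound
    {V : Type*} [DecidableEq V] [Fintype V]
    (val : V → ℝ) (hval : ∀ u : V, 0 < val u)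
    {m : ℕ} (C : (i : Fin m) → (Fin (i : ℕ) → V) → Finset V)
    (hC_ne : ∀ (i : Fin m) (h : Fin (i : ℕ) → V), (C i h).Nonempty)
    (ε : ℝ) (hε0 : 0 < ε) (hε1 : ε < 1)
    (D : Finset V)
    (hC_card : ∀ (i : Fin m) (h : Fin (i : ℕ) → V),
      (D.card : ℝ) / ε ≤ ((C i h).card : ℝ))
    (i : Fin m) :
    (∑ h : Fin m → V, histProb val C h * (if h i ∈ D then val (h i) else 0)
        = ∑ h : Fin m → V, histProb val C h *
            (((C i (prefixOf h i) ∩ D).card : ℝ) / zC val (C i (prefixOf h i)))) ∧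
    (∑ h : Fin m → V, histProb val C h *
          (((C i (prefixOf h i) ∩ D).card : ℝ) / zC val (C i (prefixOf h i)))
        ≤ ∑ h : Fin m → V, histProb val C h *
            ((D.card : ℝ) / zC val (C i (prefixOf h i)))) ∧
    (∑ h : Fin m → V, histProb val C h *
          ((D.card : ℝ) / zC val (C i (prefixOf h i)))
        ≤ ε * ∑ h : Fin m → V, histProb val C h *
            (((C i (prefixOf h i)).card : ℝ) / zC val (C i (prefixOf h i)))) ∧
    (ε * ∑ h : Fin m → V, histProb val C h *
          (((C i (prefixOf h i)).card : ℝ) / zC val (C i (prefixOf h i)))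
        = ε * ∑ h : Fin m → V, histProb val C h * val (h i)) := by
  have hm : 0 < m := i.pos
  have hV : Nonempty V := ⟨(hC_ne ⟨0, hm⟩ Fin.elim0).choose⟩
  have hP : ∀ h : Fin m → V, 0 ≤ histProb val C h := histProb_nonneg val hval C
  refine ⟨?_, ?_, ?_, ?_⟩
  · have := cond_exp val hval C hC_ne i (fun u _ => if u ∈ D then val u else 0)
    rw [this]
    exact Finset.sum_congr rfl fun h _ => by rw [Gexp_indicator val hval]
  · refine Finset.sum_le_sum fun h _ => ?_
    have hz : 0 < zC val (C i (prefixOf h i)) := zC_pos val hval (hC_ne i _)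
    have hcard : ((C i (prefixOf h i) ∩ D).card : ℝ) ≤ (D.card : ℝ) := by
      exact_mod_cast Finset.card_le_card (Finset.inter_subset_right)
    gcongr
    exact hP h
  · rw [Finset.mul_sum]
    refine Finset.sum_le_sum fun h _ => ?_
    have hz : 0 < zC val (C i (prefixOf h i)) := zC_pos val hval (hC_ne i _)
    have hcard : (D.card : ℝ) ≤ ε * ((C i (prefixOf h i)).card : ℝ) := by
      have := hC_card i (prefixOf h i)
      rw [div_le_iff₀ hε0] at this
      linarith
    have h1 : (D.card : ℝ) / zC val (C i (prefixOf h i))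
        ≤ ε * (((C i (prefixOf h i)).card : ℝ) / zC val (C i (prefixOf h i))) := by
      rw [← mul_div_assoc]
      gcongr
    calc histProb val C h * ((D.card : ℝ) / zC val (C i (prefixOf h i)))
        ≤ histProb val C h *
            (ε * (((C i (prefixOf h i)).card : ℝ) / zC val (C i (prefixOf h i)))) :=
          mul_le_mul_of_nonneg_left h1 (hP h)
      _ = ε * (histProb val C h *
            (((C i (prefixOf h i)).card : ℝ) / zC val (C i (prefixOf h i)))) := by ring
  · congr 1
    have := cond_exp val hval C hC_ne i (fun u _ => val u)
    rw [this]
    exact Finset.sum_congr rfl fun h _ => by rw [Gexp_val val hval]
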